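/- arXiv:2107.11971 — 3 statements merged into one kernel-verified Lean document; each statement's English description precedes it below -/
import Mathlib

section
/- For a real number r with |r| < 1 and an odd natural number k = 2m+1 (m ≥ 0), the series ∑_{t=k}^∞ t · ((t - (k+1)/2)! / (t-k)!) · r^{t-k} equals ((k-1)/2)! · ((k-1)/2) / (1-r)^{(k+1)/2} + ((k+1)/2)! / (1-r)^{(k+1)/2 + 1}. -/
/-- For `|r| < 1` and odd `k = 2m+1`,
`∑_{t=k}^∞ t ((t-(k+1)/2)!/(t-k)!) r^{t-k}
  = ((k-1)/2)! ((k-1)/2)/(1-r)^{(k+1)/2} + ((k+1)/2)!/(1-r)^{(k+1)/2+1}`.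
Reindexing with `t = n + k`, `k = 2m+1`, `(k+1)/2 = m+1`, the factorial ratio
`(t-(m+1))!/(t-k)! = (n+m)!/n!` is `(n+m).descFactorial m`. -/
theorem stmt1 (r : ℝ) (hr : |r| < 1) (m : ℕ) :
    HasSum (fun n : ℕ =>
        ((n + (2 * m + 1) : ℕ) : ℝ) * ((n + m).descFactorial m : ℝ) * r ^ n)
      ((m.factorial : ℝ) * m / (1 - r) ^ (m + 1)
        + ((m + 1).factorial : ℝ) / (1 - r) ^ (m + 2)) := by
  have hr' : ‖r‖ < 1 := hr
  have H1 : HasSum (fun n : ℕ => ((m.factorial : ℝ) * m) * (((n + m).choose m : ℝ) * r ^ n))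
      (((m.factorial : ℝ) * m) * (1 / (1 - r) ^ (m + 1))) :=
    (hasSum_choose_mul_geometric_of_norm_lt_one m hr').mul_left _
  have H2 : HasSum (fun n : ℕ =>
      (((m + 1).factorial : ℝ)) * (((n + (m + 1)).choose (m + 1) : ℝ) * r ^ n))
      (((m + 1).factorial : ℝ) * (1 / (1 - r) ^ (m + 2))) :=
    (hasSum_choose_mul_geometric_of_norm_lt_one (m + 1) hr').mul_left _
  have H := H1.add H2
  have key : ∀ n : ℕ,
      ((n + (2 * m + 1) : ℕ) : ℝ) * ((n + m).descFactorial m : ℝ) * r ^ n =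
      ((m.factorial : ℝ) * m) * (((n + m).choose m : ℝ) * r ^ n)
        + (((m + 1).factorial : ℝ)) * (((n + (m + 1)).choose (m + 1) : ℝ) * r ^ n) := by
    intro n
    have hnat : (n + (2 * m + 1)) * (n + m).descFactorial m =
        m.factorial * m * ((n + m).choose m)
          + (m + 1).factorial * ((n + (m + 1)).choose (m + 1)) := by
      have hd : (n + m).descFactorial m = m.factorial * (n + m).choose m := by
        rw [Nat.descFactorial_eq_factorial_mul_choose]
      have hsucc : (m + 1) * (n + m + 1).choose (m + 1) = (n + m + 1) * (n + m).choose m := by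
        have := Nat.add_one_mul_choose_eq (n + m) m
        simpa [Nat.succ_eq_add_one, Nat.mul_comm] using this.symm
      have h2 : (n + (m + 1)) = n + m + 1 := by ring
      rw [hd, h2, Nat.factorial_succ]
      calc (n + (2 * m + 1)) * (m.factorial * (n + m).choose m)
          = m.factorial * (m * (n + m).choose m) + m.factorial * ((n + m + 1) * (n + m).choose m) := by
            ring
        _ = m.factorial * m * (n + m).choose m + m.factorial * ((m + 1) * (n + m + 1).choose (m + 1)) := by
            rw [hsucc]; ring
        _ = _ := by ring
    have := congrArg (fun x : ℕ => (x : ℝ) * r ^ n) hnat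
    push_cast at this ⊢
    linarith [this]
  have heq : ((m.factorial : ℝ) * m) * (1 / (1 - r) ^ (m + 1))
      + ((m + 1).factorial : ℝ) * (1 / (1 - r) ^ (m + 2))
      = (m.factorial : ℝ) * m / (1 - r) ^ (m + 1)
        + ((m + 1).factorial : ℝ) / (1 - r) ^ (m + 2) := by ring
  rw [← heq]
  exact (funext key : _) ▸ H
end

section
/- Let (X₁, X₂) have the Marshall–Olkin bivariate exponential distribution with X₁ = min(P, R), X₂ = min(Q, R) for independent exponentials P ~ Exp(λ₁), Q ~ Exp(λ₂), R ~ Exp(λ₁₂). Then the joint survival function is S(x₁, x₂) = P[X₁ > x₁, X₂ > x₂] = exp(−λ₁x₁ − λ₂x₂ − λ₁₂·max(x₁, x₂)) for x₁, x₂ > 0. -/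
open MeasureTheory ProbabilityTheory

lemma expMeasure_Ioi {r : ℝ} (hr : 0 < r) {t : ℝ} (ht : 0 ≤ t) :
    expMeasure r (Set.Ioi t) = ENNReal.ofReal (Real.exp (-(r * t))) := by
  have hprob : IsProbabilityMeasure (expMeasure r) := isProbabilityMeasure_expMeasure hr
  have hIic : expMeasure r (Set.Iic t) = ENNReal.ofReal (1 - Real.exp (-(r * t))) := by
    have := cdf_expMeasure_eq hr t
    rw [if_pos ht] at this
    have h2 : cdf (expMeasure r) t = ((expMeasure r) (Set.Iic t)).toReal := by
      simp [cdf_eq_real, measureReal_def]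
    rw [h2] at this
    rw [← this, ENNReal.ofReal_toReal (measure_ne_top _ _)]
  have : expMeasure r (Set.Ioi t) = 1 - expMeasure r (Set.Iic t) := by
    rw [← prob_compl_eq_one_sub measurableSet_Iic]
    congr 1
    simp
  have hle : Real.exp (-(r * t)) ≤ 1 := Real.exp_le_one_iff.mpr (by nlinarith)
  rw [this, hIic, ← ENNReal.ofReal_one,
    ← ENNReal.ofReal_sub _ (sub_nonneg.mpr hle)]
  congr 1
  ring

/-- Joint survival function of the Marshall–Olkin bivariate exponential:
with `X₁ = min(P,R)`, `X₂ = min(Q,R)` for independent `P ~ Exp(λ₁)`,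
`Q ~ Exp(λ₂)`, `R ~ Exp(λ₁₂)`, for all `x₁, x₂ > 0`,
`P[X₁ > x₁, X₂ > x₂] = exp(−λ₁x₁ − λ₂x₂ − λ₁₂ max(x₁,x₂))`. -/
theorem stmt5 {Ω : Type*} [MeasurableSpace Ω] (μ : Measure Ω) [IsProbabilityMeasure μ]
    (P Q R : Ω → ℝ) (hP : Measurable P) (hQ : Measurable Q) (hR : Measurable R)
    (hindep : iIndepFun ![P, Q, R] μ)
    (l1 l2 l12 : ℝ) (hl1 : 0 < l1) (hl2 : 0 < l2) (hl12 : 0 < l12)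
    (hPlaw : μ.map P = expMeasure l1) (hQlaw : μ.map Q = expMeasure l2)
    (hRlaw : μ.map R = expMeasure l12) :
    ∀ x₁ x₂ : ℝ, 0 < x₁ → 0 < x₂ →
      μ {ω | x₁ < min (P ω) (R ω) ∧ x₂ < min (Q ω) (R ω)}
        = ENNReal.ofReal (Real.exp (-l1 * x₁ - l2 * x₂ - l12 * max x₁ x₂)) := by
  intro x₁ x₂ hx₁ hx₂
  set t : Fin 3 → ℝ := ![x₁, x₂, max x₁ x₂] with ht
  set s : Fin 3 → Set Ω := fun i => (![P, Q, R] i) ⁻¹' Set.Ioi (t i) with hs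
  have hset : {ω | x₁ < min (P ω) (R ω) ∧ x₂ < min (Q ω) (R ω)} = ⋂ i, s i := by
    ext ω
    simp only [Set.mem_setOf_eq, Set.mem_iInter, lt_min_iff, Fin.forall_fin_succ,
      hs, ht, Set.mem_preimage, Set.mem_Ioi]
    simp [Fin.forall_fin_two, max_lt_iff]
    tauto
  have hprod : μ (⋂ i, s i) = ∏ i, μ (s i) := by
    refine hindep.meas_iInter fun i => ⟨Set.Ioi (t i), measurableSet_Ioi, rfl⟩
  have h0 : μ (s 0) = ENNReal.ofReal (Real.exp (-(l1 * x₁))) := by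
    have : μ (s 0) = (μ.map P) (Set.Ioi x₁) := by
      rw [Measure.map_apply hP measurableSet_Ioi]; rfl
    rw [this, hPlaw, expMeasure_Ioi hl1 hx₁.le]
  have h1 : μ (s 1) = ENNReal.ofReal (Real.exp (-(l2 * x₂))) := by
    have : μ (s 1) = (μ.map Q) (Set.Ioi x₂) := by
      rw [Measure.map_apply hQ measurableSet_Ioi]; rfl
    rw [this, hQlaw, expMeasure_Ioi hl2 hx₂.le]
  have h2 : μ (s 2) = ENNReal.ofReal (Real.exp (-(l12 * max x₁ x₂))) := by
    have : μ (s 2) = (μ.map R) (Set.Ioi (max x₁ x₂)) := by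
      rw [Measure.map_apply hR measurableSet_Ioi]; rfl
    rw [this, hRlaw, expMeasure_Ioi hl12 (le_max_of_le_left hx₁.le)]
  rw [hset, hprod, Fin.prod_univ_three, h0, h1, h2,
    ← ENNReal.ofReal_mul (by positivity), ← ENNReal.ofReal_mul (by positivity),
    ← Real.exp_add, ← Real.exp_add]
  ring_nf
end

section
/- Under the MOBW model with parameters λ₁, λ₂, λ₁₂ > 0, η > 0, conditional on X₁ = x₁ and X₁ < X₂, the second event satisfies P[X₂ > x₂ | X₁ = x₁, X₁ < X₂] = exp(−(λ₂+λ₁₂)(x₂^η − x₁^η)) for x₂ > x₁; hence the conditional (1−α)-quantile is (x₁^η − (λ₂+λ₁₂)^{−1} ln α)^{1/η}. -/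
open Real

/-- Under the MOBW model, conditional on `X₁ = x₁ < X₂`, the conditional survival of
the second event is `S₁(x₁,x₂)/S₁(x₁,x₁) = exp(−(λ₂+λ₁₂)(x₂^η − x₁^η))` for `x₂ > x₁`,
where `S₁ = ∂S/∂x₁`; hence the conditional `(1−α)`-quantile is
`(x₁^η − (λ₂+λ₁₂)^{−1} ln α)^{1/η}`. -/
theorem stmt16 (l1 l2 l12 η : ℝ) (hl1 : 0 < l1) (hl2 : 0 < l2) (hl12 : 0 < l12)
    (hη : 0 < η) (S S₁ : ℝ → ℝ → ℝ)
    (hS : ∀ x₁ x₂ : ℝ, S x₁ x₂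
      = Real.exp (-l1 * x₁ ^ η - l2 * x₂ ^ η - l12 * (max x₁ x₂) ^ η))
    (hS₁ : ∀ x₂ : ℝ, ∀ x₁ : ℝ, x₁ < x₂ → HasDerivAt (fun y => S y x₂) (S₁ x₁ x₂) x₁)
    (hS₁diag : ∀ x₁ : ℝ, 0 < x₁ →
      Filter.Tendsto (fun t => S₁ x₁ t) (nhdsWithin x₁ (Set.Ioi x₁)) (nhds (S₁ x₁ x₁)))
    (α : ℝ) (hα0 : 0 < α) (hα1 : α < 1)
    (x₁ x₂ : ℝ) (hx₁ : 0 < x₁) (hx₁₂ : x₁ < x₂) :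
    S₁ x₁ x₂ / S₁ x₁ x₁ = Real.exp (-(l2 + l12) * (x₂ ^ η - x₁ ^ η)) ∧
    Real.exp (-(l2 + l12) *
        (((x₁ ^ η - (l2 + l12)⁻¹ * Real.log α) ^ (1 / η)) ^ η - x₁ ^ η)) = α := by
  set K : ℝ := -l1 * (η * x₁ ^ (η - 1)) with hK
  set D : ℝ → ℝ := fun t =>
    Real.exp (-l1 * x₁ ^ η - l2 * t ^ η - l12 * t ^ η) * K with hD
  -- Step 1: for x₁ < t, S₁ x₁ t = D t
  have key : ∀ t : ℝ, x₁ < t → S₁ x₁ t = D t := by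
    intro t ht
    have hpow : HasDerivAt (fun y : ℝ => y ^ η) (η * x₁ ^ (η - 1)) x₁ :=
      Real.hasDerivAt_rpow_const (Or.inl hx₁.ne')
    have hg : HasDerivAt (fun y : ℝ => -l1 * y ^ η - l2 * t ^ η - l12 * t ^ η)
        K x₁ := ((hpow.const_mul (-l1)).sub_const _).sub_const _
    have hexp := hg.exp
    have heq : (fun y => S y t) =ᶠ[nhds x₁]
        (fun y => Real.exp (-l1 * y ^ η - l2 * t ^ η - l12 * t ^ η)) := by
      filter_upwards [Iio_mem_nhds ht] with y hy
      rw [hS]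
      have : max y t = t := max_eq_right (le_of_lt hy)
      rw [this]
    have hderiv : HasDerivAt (fun y => S y t)
        (Real.exp (-l1 * x₁ ^ η - l2 * t ^ η - l12 * t ^ η) * K) x₁ :=
      hexp.congr_of_eventuallyEq heq
    exact (hS₁ t x₁ ht).unique hderiv
  -- Step 2: S₁ x₁ x₁ = D x₁ via limit uniqueness
  have hDK : ContinuousAt D x₁ := by
    have hct : ContinuousAt (fun t : ℝ => t ^ η) x₁ :=
      Real.continuousAt_rpow_const x₁ η (Or.inl hx₁.ne')
    exact (((continuousAt_const.sub (hct.const_mul l2)).sub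
      (hct.const_mul l12)).rexp.mul continuousAt_const : _)
  have hlim : Filter.Tendsto (fun t => S₁ x₁ t) (nhdsWithin x₁ (Set.Ioi x₁))
      (nhds (D x₁)) := by
    refine (hDK.continuousWithinAt.tendsto).congr' ?_
    filter_upwards [self_mem_nhdsWithin] with t ht
    exact (key t ht).symm
  have hdiag : S₁ x₁ x₁ = D x₁ := tendsto_nhds_unique (hS₁diag x₁ hx₁) hlim
  have hKne : K ≠ 0 := by
    have : 0 < x₁ ^ (η - 1) := Real.rpow_pos_of_pos hx₁ _
    have : 0 < l1 * (η * x₁ ^ (η - 1)) := by positivity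
    simp only [hK, neg_mul]
    exact neg_ne_zero.mpr this.ne'
  constructor
  · rw [key x₂ hx₁₂, hdiag, hD]
    rw [mul_div_mul_right _ _ hKne, ← Real.exp_sub]
    ring_nf
  · have hls : (0:ℝ) < l2 + l12 := by linarith
    have hlog : Real.log α < 0 := Real.log_neg hα0 hα1
    have ha : (0:ℝ) < x₁ ^ η - (l2 + l12)⁻¹ * Real.log α := by
      have h1 : 0 < x₁ ^ η := Real.rpow_pos_of_pos hx₁ _
      have h2 : (l2 + l12)⁻¹ * Real.log α < 0 :=
        mul_neg_of_pos_of_neg (inv_pos.mpr hls) hlog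
      linarith
    rw [← Real.rpow_mul ha.le, one_div_mul_cancel hη.ne', Real.rpow_one]
    have : -(l2 + l12) * (x₁ ^ η - (l2 + l12)⁻¹ * Real.log α - x₁ ^ η) = Real.log α := by
      field_simp
      ring
    rw [this, Real.exp_log hα0]
end
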